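/- arXiv:2001.11895 — 2 statements merged into one kernel-verified Lean document; each statement's English description precedes it below -/
import Mathlib

section
/- A relational monoid (X,R) is coherent if and only if for all x, y, r x = ℓ y implies D(x,y). -/
/-- Relational associativity. -/
def RelAssoc {X : Type*} (R : X → X → X → Prop) : Prop :=
  ∀ u x y z : X, (∃ v, R u x v ∧ R v y z) ↔ (∃ v, R u v z ∧ R v x y)

/-- Definedness: `D R x y` iff the composite of `x` and `y` exists. -/
def D {X : Type*} (R : X → X → X → Prop) (x y : X) : Prop := ∃ z, R z x y

/-- Relational left unit. -/
def IsLUnit {X : Type*} (R : X → X → X → Prop) (e : X) : Prop :=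
  (∃ x, R x e x) ∧ ∀ x y, R y e x → y = x

/-- Relational right unit. -/
def IsRUnit {X : Type*} (R : X → X → X → Prop) (e : X) : Prop :=
  (∃ x, R x x e) ∧ ∀ x y, R y x e → y = x

/-- Relational unit: a left or a right unit. -/
def IsUnit' {X : Type*} (R : X → X → X → Prop) (e : X) : Prop :=
  IsLUnit R e ∨ IsRUnit R e

/-- Relational monoid: relationally associative, and every element has a left
unit composable on the left and a right unit composable on the right. -/
def RelMonoid {X : Type*} (R : X → X → X → Prop) : Prop :=
  RelAssoc R ∧ ∀ x, (∃ e, IsLUnit R e ∧ D R e x) ∧ (∃ e, IsRUnit R e ∧ D R x e)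

/-- Coherence. -/
def Coherent {X : Type*} (R : X → X → X → Prop) : Prop :=
  ∀ v x y z, R v x y → D R y z → D R v z

/-- Weak functionality: `R` is a partial operation. -/
def WFun {X : Type*} (R : X → X → X → Prop) : Prop :=
  ∀ x x' y z, R x y z → R x' y z → x = x'

/-!
A left unit `e` of a relational monoid is also a right unit: `e` has a right unit `e₀` with
`R w e e₀`, and the left-unit law forces `w = e₀`, then the right-unit law forces `e₀ = e`.
Associativity then shows that units on the diagonal `R x x _` are unique, that a composite
`R v x y` has the right unit of `y`, and that `D y z` makes the right unit of `y` the left unit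
of `z`. Hence `r v = r y = ℓ z` whenever `R v x y` and `D y z`, so the criterion gives coherence;
conversely coherence applied to `R x x (r x)` and `D (r x) y` gives `D x y`.
-/

section

variable {X : Type*} {R : X → X → X → Prop}

namespace RelAssoc

variable (hA : RelAssoc R) {e : X}
include hA

theorem eq_of_isLUnit_of_isRUnit {e' x : X} (he : IsRUnit R e) (he' : IsLUnit R e')
    (h : R x x e) (h' : R x x e') : e' = e := by
  obtain ⟨v, -, hve⟩ := (hA x x e' e).mpr ⟨x, h, h'⟩
  obtain rfl : v = e' := he.2 e' v hve
  exact he'.2 e v hve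

theorem right_unit_of_comp {v x y : X} (he : IsRUnit R e) (hvxy : R v x y) (hy : R y y e) :
    R v v e := by
  obtain ⟨s, hvs, -⟩ := (hA v x y e).mp ⟨y, hvxy, hy⟩
  obtain rfl : v = s := he.2 s v hvs
  exact hvs

theorem right_unit_of_D {y z : X} (he : IsRUnit R e) (hyz : D R y z) (hz : R z e z) :
    R y y e := by
  obtain ⟨w, hw⟩ := hyz
  obtain ⟨s, -, hsy⟩ := (hA w y e z).mp ⟨z, hw, hz⟩
  obtain rfl : s = y := he.2 y s hsy
  exact hsy

end RelAssoc

namespace RelMonoid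

variable (hM : RelMonoid R) {e : X}
include hM

theorem isRUnit_of_isLUnit (he : IsLUnit R e) : IsRUnit R e := by
  obtain ⟨e₀, he₀, w, hw⟩ := (hM.2 e).2
  obtain rfl : w = e₀ := he.2 e₀ w hw
  obtain rfl : w = e := he₀.2 e w hw
  exact he₀

theorem isLUnit_of_isRUnit (he : IsRUnit R e) : IsLUnit R e := by
  obtain ⟨e₀, he₀, w, hw⟩ := (hM.2 e).1
  obtain rfl : w = e₀ := he.2 e₀ w hw
  obtain rfl : w = e := he₀.2 e w hw
  exact he₀

theorem isLUnit (he : IsUnit' R e) : IsLUnit R e :=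
  he.elim id hM.isLUnit_of_isRUnit

theorem isRUnit (he : IsUnit' R e) : IsRUnit R e :=
  he.elim hM.isRUnit_of_isLUnit id

end RelMonoid

end

theorem stmt11 {X : Type*} (R : X → X → X → Prop) (hM : RelMonoid R)
    (l r : X → X)
    (hl : ∀ x, IsUnit' R (l x) ∧ R x (l x) x)
    (hr : ∀ x, IsUnit' R (r x) ∧ R x x (r x)) :
    Coherent R ↔ ∀ x y : X, r x = l y → D R x y := by
  refine ⟨fun hC x y hxy => hC x x (r x) y (hr x).2 ⟨y, hxy ▸ (hl y).2⟩, ?_⟩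
  intro H v x y z hvxy hyz
  have hA : RelAssoc R := hM.1
  have hrv : r v = r y :=
    hA.eq_of_isLUnit_of_isRUnit (hM.isRUnit (hr y).1) (hM.isLUnit (hr v).1)
      (hA.right_unit_of_comp (hM.isRUnit (hr y).1) hvxy (hr y).2) (hr v).2
  have hry : r y = l z :=
    hA.eq_of_isLUnit_of_isRUnit (hM.isRUnit (hl z).1) (hM.isLUnit (hr y).1)
      (hA.right_unit_of_D (hM.isRUnit (hl z).1) hyz (hl z).2) (hr y).2
  exact H v z (hrv.trans hry)
end

section
/- If a relational monoid has a relational zero, then it has exactly one unit. -/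
/-- A composite of a left unit `e` with a right unit `f` must equal both `e` and `f`. -/
theorem IsLUnit.eq_of_isRUnit {X : Type*} {R : X → X → X → Prop} {e f : X} (he : IsLUnit R e)
    (hf : IsRUnit R f) (hef : D R e f) : e = f := by
  obtain ⟨w, hw⟩ := hef
  exact (hf.2 e w hw).symm.trans (he.2 f w hw)

theorem RelMonoid.isLUnit_and_isRUnit {X : Type*} {R : X → X → X → Prop} (hM : RelMonoid R)
    {e : X} (he : IsUnit' R e) : IsLUnit R e ∧ IsRUnit R e := by
  rcases he with heL | heR
  · obtain ⟨f, hf, hef⟩ := (hM.2 e).2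
    exact ⟨heL, heL.eq_of_isRUnit hf hef ▸ hf⟩
  · obtain ⟨f, hf, hfe⟩ := (hM.2 e).1
    exact ⟨(hf.eq_of_isRUnit heR hfe) ▸ hf, heR⟩

/-- Associativity moves the composite `x ∘ y` inside `(z ∘ x) ∘ y`, which is defined through
`z = z ∘ x` and `z = z ∘ y`. -/
theorem D_of_relAssoc_of_absorbing {X : Type*} {R : X → X → X → Prop} (hA : RelAssoc R) {z : X}
    (hz : ∀ x, R z x z) (x y : X) : D R x y := by
  obtain ⟨v, -, hv⟩ := (hA z x y z).1 ⟨z, hz x, hz y⟩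
  exact ⟨v, hv⟩

theorem stmt15 {X : Type*} (R : X → X → X → Prop) (hM : RelMonoid R)
    (z : X) (hz : ∀ x, R z z x ∧ R z x z) :
    ∃! e : X, IsUnit' R e := by
  obtain ⟨⟨e, he, -⟩, -⟩ := hM.2 z
  refine ⟨e, Or.inl he, fun f hf => ?_⟩
  have hfe : D R f e := D_of_relAssoc_of_absorbing hM.1 (fun x => (hz x).2) f e
  exact (hM.isLUnit_and_isRUnit hf).1.eq_of_isRUnit (hM.isLUnit_and_isRUnit (Or.inl he)).2 hfe
end
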